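/- (Main lemma) Suppose M =β N via a zigzag of length k = l + r, where r is the number of forward reduction steps (→) and l is the number of backward steps (←) in the zigzag. Then N β-reduces to M^(r*) (the r-fold iterated Takahashi translation of M), and M β-reduces to N^(l*). -/

import Mathlib

inductive Lam : Type
  | var : ℕ → Lam
  | lam : Lam → Lam
  | app : Lam → Lam → Lam
  deriving DecidableEq

namespace Lam

/-- term size -/
def size : Lam → ℕ
  | var _ => 1
  | lam M => 1 + M.size
  | app M N => 1 + M.size + N.size

/-- lift (shift) free variables ≥ d by 1 -/
def lift (d : ℕ) : Lam → Lam
  | var n => if n < d then var n else var (n+1)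
  | lam M => lam (M.lift (d+1))
  | app M N => app (M.lift d) (N.lift d)

/-- capture-avoiding substitution of N for the free variable x (de Bruijn) -/
def subst : Lam → ℕ → Lam → Lam
  | var n, x, N => if n = x then N else if x < n then var (n-1) else var n
  | lam M, x, N => lam (M.subst (x+1) (N.lift 0))
  | app M P, x, N => app (M.subst x N) (P.subst x N)

/-- number of free occurrences of the variable x -/
def count : Lam → ℕ → ℕ
  | var n, x => if n = x then 1 else 0
  | lam M, x => M.count (x+1)
  | app M N, x => M.count x + N.count x

/-- one-step β-reduction -/
inductive Step : Lam → Lam → Prop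
  | beta (M N : Lam) : Step (app (lam M) N) (M.subst 0 N)
  | appL {M M' : Lam} (N : Lam) : Step M M' → Step (app M N) (app M' N)
  | appR (M : Lam) {N N' : Lam} : Step N N' → Step (app M N) (app M N')
  | abs {M M' : Lam} : Step M M' → Step (lam M) (lam M')

/-- many-step β-reduction (reflexive-transitive closure) -/
def Red : Lam → Lam → Prop := Relation.ReflTransGen Step

/-- n-step β-reduction -/
def Steps : ℕ → Lam → Lam → Prop
  | 0, M, N => M = N
  | n+1, M, N => ∃ P, Step M P ∧ Steps n P N

/-- Takahashi translation (Gross-Knuth complete development) -/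
def star : Lam → Lam
  | var n => var n
  | lam M => lam (star M)
  | app (lam M) N => (star M).subst 0 (star N)
  | app (var n) N => app (var n) (star N)
  | app (app M₁ M₂) N => app (star (app M₁ M₂)) (star N)

/-- iterated Takahashi translation M^(n*) -/
def iterStar (n : ℕ) (M : Lam) : Lam := star^[n] M

end Lam

/-- `Zig M l r N` : a β-conversion zigzag from M to N with l backward arrows (←)
and r forward arrows (→) -/
inductive Zig : Lam → ℕ → ℕ → Lam → Prop
  | refl (M : Lam) : Zig M 0 0 M
  | fwd {M P N : Lam} {l r : ℕ} : Lam.Step M P → Zig P l r N → Zig M l (r+1) N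
  | bwd {M P N : Lam} {l r : ℕ} : Lam.Step P M → Zig P l r N → Zig M (l+1) r N

/-! Takahashi's triangle property: if `M ⇒ N` by parallel reduction then `N ⇒ M*`. Hence a
single step `M → N` gives `N ↠ M*`, and `*` is monotone for `↠` (the triangle applied to
`N ⇒ M*` yields `M* ⇒ N*`). Along a zigzag, a forward step `M → P` is absorbed on the `r`-side by `P^(r*) ↠ M^((r+1)*)`, and a backward step
`P → M` on the `l`-side by `M ↠ P* ↠ (N^(l*))*`; the other side simply extends by the step. -/

namespace Lam

section Substitution

theorem lift_lift (M : Lam) {i j : ℕ} (h : i ≤ j) :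
    (M.lift j).lift i = (M.lift i).lift (j + 1) := by
  induction M generalizing i j with
  | var n =>
    simp only [lift]
    split_ifs <;> simp only [lift] <;> split_ifs <;>
      first | rfl | omega
  | lam M ih => simp only [lift, ih (Nat.succ_le_succ h)]
  | app M N ihM ihN => simp only [lift, ihM h, ihN h]

theorem lift_subst_of_le (M N : Lam) {d x : ℕ} (h : x ≤ d) :
    (M.subst x N).lift d = (M.lift (d + 1)).subst x (N.lift d) := by
  induction M generalizing N d x with
  | var n =>
    simp only [subst, lift]
    split_ifs <;> simp only [subst, lift] <;> split_ifs <;>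
      first | rfl | omega | (congr 1; omega)
  | lam M ih => simp only [subst, lift, ih _ (Nat.succ_le_succ h), lift_lift N (Nat.zero_le d)]
  | app M P ihM ihP => simp only [subst, lift, ihM N h, ihP N h]

theorem lift_subst_of_ge (M N : Lam) {d x : ℕ} (h : d ≤ x) :
    (M.subst x N).lift d = (M.lift d).subst (x + 1) (N.lift d) := by
  induction M generalizing N d x with
  | var n =>
    simp only [subst, lift]
    split_ifs <;> simp only [subst, lift] <;> split_ifs <;>
      first | rfl | omega | (congr 1; omega)
  | lam M ih => simp only [subst, lift, ih _ (Nat.succ_le_succ h), lift_lift N (Nat.zero_le d)]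
  | app M P ihM ihP => simp only [subst, lift, ihM N h, ihP N h]

theorem subst_lift (M N : Lam) (i : ℕ) : (M.lift i).subst i N = M := by
  induction M generalizing N i with
  | var n =>
    simp only [lift]
    split_ifs <;> simp only [subst] <;> split_ifs <;>
      first | rfl | omega
  | lam M ih => simp only [lift, subst, ih]
  | app M P ihM ihP => simp only [lift, subst, ihM, ihP]

theorem subst_subst (M N P : Lam) {i j : ℕ} (h : i ≤ j) :
    (M.subst i P).subst j N = (M.subst (j + 1) (N.lift i)).subst i (P.subst j N) := by
  induction M generalizing N P i j with
  | var n =>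
    simp only [subst]
    split_ifs <;> simp only [subst, subst_lift] <;> (try split_ifs) <;>
      first | rfl | omega
  | lam M ih =>
    simp only [subst, ih _ _ (Nat.succ_le_succ h), lift_lift N (Nat.zero_le i),
      lift_subst_of_ge P N (Nat.zero_le j)]
  | app M Q ihM ihQ => simp only [subst, ihM N P h, ihQ N P h]

end Substitution

section Reduction

theorem Step.red {M N : Lam} (h : Step M N) : Red M N :=
  Relation.ReflTransGen.single h

theorem Red.trans {M N P : Lam} (h₁ : Red M N) (h₂ : Red N P) : Red M P :=
  Relation.ReflTransGen.trans h₁ h₂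

theorem Red.app {M M' N N' : Lam} (hM : Red M M') (hN : Red N N') :
    Red (Lam.app M N) (Lam.app M' N') :=
  (Relation.ReflTransGen.lift (Lam.app · N) (fun _ _ => Step.appL N) _ _ hM).trans
    (Relation.ReflTransGen.lift (Lam.app M' ·) (fun _ _ => Step.appR M') _ _ hN)

theorem Red.lam {M M' : Lam} (h : Red M M') : Red (lam M) (lam M') :=
  Relation.ReflTransGen.lift Lam.lam (fun _ _ => Step.abs) _ _ h

end Reduction

section Parallel

inductive Par : Lam → Lam → Prop
  | var (n : ℕ) : Par (var n) (var n)
  | lam {M M' : Lam} : Par M M' → Par (lam M) (lam M')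
  | app {M M' N N' : Lam} : Par M M' → Par N N' → Par (app M N) (app M' N')
  | beta {M M' N N' : Lam} : Par M M' → Par N N' → Par (app (lam M) N) (M'.subst 0 N')

theorem Par.refl : ∀ M : Lam, Par M M
  | .var n => .var n
  | .lam M => .lam (Par.refl M)
  | .app M N => .app (Par.refl M) (Par.refl N)

theorem Step.par {M N : Lam} (h : Step M N) : Par M N := by
  induction h with
  | beta M N => exact .beta (.refl M) (.refl N)
  | appL N _ ih => exact .app ih (.refl N)
  | appR M _ ih => exact .app (.refl M) ih
  | abs _ ih => exact .lam ih

theorem Par.red {M N : Lam} (h : Par M N) : Red M N := by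
  induction h with
  | var n => exact Relation.ReflTransGen.refl
  | lam _ ih => exact ih.lam
  | app _ _ ihM ihN => exact ihM.app ihN
  | beta _ _ ihM ihN => exact (ihM.lam.app ihN).trans (Step.beta _ _).red

theorem Par.lift {M M' : Lam} (h : Par M M') (d : ℕ) : Par (M.lift d) (M'.lift d) := by
  induction h generalizing d with
  | var n => exact .refl _
  | lam _ ih => exact .lam (ih (d + 1))
  | app _ _ ihM ihN => exact .app (ihM d) (ihN d)
  | beta _ _ ihM ihN =>
    rw [Lam.lift, Lam.lift, lift_subst_of_le _ _ (Nat.zero_le d)]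
    exact .beta (ihM (d + 1)) (ihN d)

theorem Par.subst {M M' N N' : Lam} (hM : Par M M') (hN : Par N N') (x : ℕ) :
    Par (M.subst x N) (M'.subst x N') := by
  induction hM generalizing N N' x with
  | var n =>
    simp only [Lam.subst]
    split_ifs
    exacts [hN, .refl _, .refl _]
  | lam _ ih => exact .lam (ih (hN.lift 0) (x + 1))
  | app _ _ ihM ihP => exact .app (ihM hN x) (ihP hN x)
  | beta _ _ ihM ihP =>
    rw [Lam.subst, Lam.subst, subst_subst _ _ _ (Nat.zero_le x)]
    exact .beta (ihM (hN.lift 0) (x + 1)) (ihP hN x)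

theorem Par.triangle {M N : Lam} (h : Par M N) : Par N (star M) := by
  induction h with
  | var n => exact .var n
  | lam _ ih => exact .lam ih
  | @app M M' N N' hM _ ihM ihN =>
    cases M with
    | lam M₁ =>
      cases hM with
      | lam _ =>
        cases ihM with
        | lam ih₁ => exact .beta ih₁ ihN
    | var n => exact .app ihM ihN
    | app _ _ => exact .app ihM ihN
  | beta _ _ ihM ihN => exact ihM.subst ihN 0

theorem Par.star {M N : Lam} (h : Par M N) : Par (star M) (star N) :=
  h.triangle.triangle

end Parallel

section Star

theorem Step.red_star {M N : Lam} (h : Step M N) : Red N (star M) :=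
  h.par.triangle.red

theorem Red.star {M N : Lam} (h : Red M N) : Red (star M) (star N) := by
  induction h with
  | refl => exact Relation.ReflTransGen.refl
  | tail _ hstep ih => exact ih.trans hstep.par.star.red

theorem iterStar_succ (n : ℕ) (M : Lam) : iterStar (n + 1) M = iterStar n (star M) :=
  Function.iterate_succ_apply star n M

theorem iterStar_succ' (n : ℕ) (M : Lam) : iterStar (n + 1) M = star (iterStar n M) :=
  Function.iterate_succ_apply' star n M

theorem Red.iterStar {M N : Lam} (h : Red M N) (n : ℕ) : Red (iterStar n M) (iterStar n N) := by
  induction n with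
  | zero => exact h
  | succ n ih => simpa only [iterStar_succ'] using ih.star

end Star

end Lam

/-- main lemma: if M =β N via a zigzag with r forward and l backward
arrows, then N ↠ M^(r*) and M ↠ N^(l*) -/
theorem main_lemma {M N : Lam} {l r : ℕ} (h : Zig M l r N) :
    Lam.Red N (Lam.iterStar r M) ∧ Lam.Red M (Lam.iterStar l N) := by
  induction h with
  | refl M => exact ⟨Relation.ReflTransGen.refl, Relation.ReflTransGen.refl⟩
  | fwd hMP _ ih =>
    refine ⟨?_, hMP.red.trans ih.2⟩
    rw [Lam.iterStar_succ]
    exact ih.1.trans (hMP.red_star.iterStar _)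
  | bwd hPM _ ih =>
    refine ⟨ih.1.trans (hPM.red.iterStar _), ?_⟩
    rw [Lam.iterStar_succ']
    exact hPM.red_star.trans ih.2.star
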